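/- Let (A,m) be a Noetherian local ring with infinite residue field, I an m-primary ideal, and M a one-dimensional finitely generated A-module. Let b be a positive integer such that IM ⊆ m^b M. If e_0(I,M) ≠ e_0(m^b,M), then the length of the degree-zero component of G_I(M)/H^0_{G_+}(G_I(M)) is at least b+1. -/

import Mathlib

open Pointwise IsLocalRing

namespace HilbC

variable (A : Type*) [CommRing A]

/-- The colon submodule `(N :_M J) = {x ∈ M | J x ⊆ N}`. -/
def icolon {M : Type*} [AddCommGroup M] [Module A M] (N : Submodule A M) (J : Ideal A) :
    Submodule A M where
  carrier := {x | ∀ a ∈ J, a • x ∈ N}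
  add_mem' := fun hx hy a ha => by rw [smul_add]; exact N.add_mem (hx a ha) (hy a ha)
  zero_mem' := fun a ha => by rw [smul_zero]; exact N.zero_mem
  smul_mem' := fun c x hx a ha => by rw [smul_comm]; exact N.smul_mem c (hx a ha)

variable (M : Type*) [AddCommGroup M] [Module A M]

/-- The length of a module, as the Krull dimension (longest chain) of its submodule lattice. -/
noncomputable def llen : ℕ∞ := (Order.krullDim (Submodule A M)).unbotD 0

/-- Length as an integer (finite-length situations). -/
noncomputable def llenZ : ℤ := ((llen A M).toNat : ℤ)

/-- `ℓ(M/N)` as an `ℕ∞`. -/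
noncomputable def qlen (N : Submodule A M) : ℕ∞ := llen A (M ⧸ N)

/-- `ℓ(M/N)` as an integer. -/
noncomputable def qlenZ (N : Submodule A M) : ℤ := ((qlen A M N).toNat : ℤ)

/-- `ℓ(N/(N ⊓ P))` as an `ℕ∞`. -/
noncomputable def sqlen (N P : Submodule A M) : ℕ∞ :=
  llen A (↥N ⧸ (Submodule.comap N.subtype P))

noncomputable def sqlenZ (N P : Submodule A M) : ℤ := ((sqlen A M N P).toNat : ℤ)

/-- The `n`-th piece `I^n M` of the `I`-adic filtration. -/
def pw (I : Ideal A) (n : ℕ) : Submodule A M := I ^ n • ⊤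

/-- Hilbert–Samuel function `n ↦ ℓ(M/I^n M)` (as an integer). -/
noncomputable def hsZ (I : Ideal A) (n : ℕ) : ℤ := qlenZ A M (pw A M I n)

/-- Hilbert function `n ↦ ℓ(I^n M/I^{n+1} M)` (as an integer). -/
noncomputable def hfZ (I : Ideal A) (n : ℕ) : ℤ := sqlenZ A M (pw A M I n) (pw A M I (n + 1))

/-- The Ratliff–Rush type saturation `⋃ₖ (I^{n+1+k} M :_M I^k)`, i.e. the submodule of `M`
representing (the lift of) the degree `n` part of the `G₊`-torsion of `G_I(M)`. -/
def rrsat (I : Ideal A) (n : ℕ) : Submodule A M := ⨆ k : ℕ, icolon A (pw A M I (n + 1 + k)) (I ^ k)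

/-- `ℓ(H⁰_{G₊}(G_I(M))_n)`: the length of the degree `n` piece of the `G₊`-torsion submodule of
`G_I(M)`, which is `((⋃ₖ (I^{n+1+k}M :_M I^k)) ∩ I^n M)/I^{n+1}M`. -/
noncomputable def h0 (I : Ideal A) (n : ℕ) : ℕ∞ :=
  sqlen A M (rrsat A M I n ⊓ pw A M I n) (pw A M I (n + 1))

noncomputable def h0Z (I : Ideal A) (n : ℕ) : ℤ := ((h0 A M I n).toNat : ℤ)

/-- `ℓ(H⁰_{G₊}(G_I(M))_n)` for `n : ℤ` (vanishing in negative degrees). -/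
noncomputable def h0Zx (I : Ideal A) (n : ℤ) : ℤ := if n < 0 then 0 else h0Z A M I n.toNat

/-- `ℓ(H¹_{G₊}(G_I(M))_n)` for a one-dimensional module, obtained from the Grothendieck–Serre
formula `H_{I,M}(n) - HP_{I,M}(n) = ℓ(H⁰_n) - ℓ(H¹_n)`; here `e0 = HP_{I,M}` is the (constant)
Hilbert polynomial of `G_I(M)`, and the Hilbert function vanishes in negative degrees. -/
noncomputable def h1Zx (I : Ideal A) (e0 : ℤ) (n : ℤ) : ℤ :=
  if n < 0 then e0 else h0Z A M I n.toNat + e0 - hfZ A M I n.toNat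

/-- `a₀(G_I(M)) ≤ t`. -/
def a0le (I : Ideal A) (t : ℤ) : Prop := ∀ n : ℤ, t < n → h0Zx A M I n = 0

/-- `a₀(G_I(M)) < t`. -/
def a0lt (I : Ideal A) (t : ℤ) : Prop := ∀ n : ℤ, t ≤ n → h0Zx A M I n = 0

/-- `a₁(G_I(M)) = t` (one-dimensional case). -/
def a1eq (I : Ideal A) (e0 t : ℤ) : Prop :=
  h1Zx A M I e0 t ≠ 0 ∧ ∀ n : ℤ, t < n → h1Zx A M I e0 n = 0

/-- `reg(G_I(M)) = max{a₀, a₁ + 1} = r` (one-dimensional case). -/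
def regeq (I : Ideal A) (e0 r : ℤ) : Prop :=
  (∀ n : ℤ, r < n → h0Zx A M I n = 0) ∧ (∀ n : ℤ, r ≤ n → h1Zx A M I e0 n = 0) ∧
    (h0Zx A M I r ≠ 0 ∨ h1Zx A M I e0 (r - 1) ≠ 0)

/-- The postulation number of `G_I(M)` for a one-dimensional module (the Hilbert
polynomial is the constant `e0`). -/
noncomputable def pnum (I : Ideal A) (e0 : ℤ) : ℕ :=
  sInf {p : ℕ | ∀ n : ℕ, p ≤ n → hfZ A M I n = e0}

/-- The dimension of the module `M` is `d`. -/
def dimEq (d : ℕ) : Prop := ringKrullDim (A ⧸ Module.annihilator A M) = d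

/-- `M` is a Cohen–Macaulay module of dimension `d`: it has dimension `d` and admits a
regular sequence of length `d` inside the maximal ideal. -/
def isCM [IsLocalRing A] (d : ℕ) : Prop :=
  dimEq A M d ∧ ∃ rs : List A, rs.length = d ∧ (∀ a ∈ rs, a ∈ maximalIdeal A) ∧
    RingTheory.Sequence.IsRegular M rs

/-- `I` is an `m`-primary ideal of the local ring `A`. -/
def mprim [IsLocalRing A] (I : Ideal A) : Prop := I.radical = maximalIdeal A

/-- minimal number of generators of an ideal, `μ(J) = ℓ(J/mJ)`. -/
noncomputable def mu [IsLocalRing A] (J : Ideal A) : ℤ :=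
  sqlenZ A A (J : Submodule A A) (maximalIdeal A • (J : Submodule A A))

/-- The binomial coefficient `C(x, 2)` for an integer `x`. -/
def c2 (x : ℤ) : ℤ := x * (x - 1) / 2

/-- The binomial coefficient `C(x, 3)` for an integer `x`. -/
def c3 (x : ℤ) : ℤ := x * (x - 1) * (x - 2) / 6


/-- The Hilbert coefficients `e_i = Q^{(i)}(1)/i!` extracted from the numerator polynomial `Q`
of the Hilbert series `P_{I,M}(z) = Q(z)/(1-z)^d`. -/
noncomputable def eQ (Q : Polynomial ℤ) (i : ℕ) : ℤ :=
  ∑ j ∈ Finset.range (Q.natDegree + 1), Q.coeff j * (j.choose i : ℤ)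

end HilbC

/-!
If `𝔪^i M` lay in the saturation `W = ⋃ₖ (I^{k+1}M :_M I^k)` for some `i ≤ b`, then
`𝔪^b I^k M ⊆ I^{k+1} M` for large `k`, so the `I`-adic and `𝔪^b`-adic filtrations of `M` are
cofinal up to a bounded shift of degrees and the two Hilbert–Samuel polynomials have the same
leading coefficient. Otherwise Nakayama's lemma makes `W + 𝔪^i M`, `0 ≤ i ≤ b + 1`, a strictly
decreasing chain, which has length `b + 1` in `M ⧸ W`.
-/

open Submodule Filter IsLocalRing

namespace HilbC

section Module

variable {A : Type*} [CommRing A] {M : Type*} [AddCommGroup M] [Module A M]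

theorem llen_eq_length : llen A M = Module.length A M := by
  rw [llen, ← Module.coe_length]
  rfl

theorem qlen_antitone {P Q : Submodule A M} (h : P ≤ Q) : qlen A M Q ≤ qlen A M P := by
  simp only [qlen, llen_eq_length]
  exact Module.length_le_of_surjective (P.factor h) (factor_surjective h)

theorem qlenZ_le_qlenZ {P Q : Submodule A M} (h : P ≤ Q) (hP : qlen A M P ≠ ⊤) :
    qlenZ A M Q ≤ qlenZ A M P :=
  Int.ofNat_le.mpr (ENat.toNat_le_toNat (qlen_antitone h) hP)

theorem sqlen_top (P : Submodule A M) : sqlen A M ⊤ P = qlen A M P := by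
  simp only [sqlen, qlen, llen_eq_length]
  exact (Quotient.equiv _ _ topEquiv (by ext; simp)).length_eq

theorem le_qlen_of_decreasing_chain {W : Submodule A M} {n : ℕ} {f : ℕ → Submodule A M}
    (hW : ∀ i, W ≤ f i) (hf : ∀ i < n, f (i + 1) < f i) : (n : ℕ∞) ≤ qlen A M W := by
  let p : LTSeries (Set.Ici W) := LTSeries.mk n (fun j => ⟨f (n - j), hW _⟩) <|
    Fin.strictMono_iff_lt_succ.mpr fun j => by
      have hj := j.isLt
      have := hf (n - (j + 1)) (by omega)
      simpa [show n - (j + 1) + 1 = n - j by omega] using this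
  rw [qlen, llen_eq_length, ← WithBot.coe_le_coe, Module.coe_length,
    Order.krullDim_eq_of_orderIso (comapMkQRelIso W)]
  exact Order.LTSeries.length_le_krullDim p

theorem qlen_smul_top_ne_top [IsNoetherianRing A] [IsLocalRing A] [Module.Finite A M]
    {J : Ideal A} (hJ : J.radical = maximalIdeal A) : qlen A M (J • ⊤) ≠ ⊤ := by
  have : IsArtinianRing (A ⧸ J) := by
    refine quotient_artinian_of_mem_minimalPrimes_of_isLocalRing J ?_
    rw [← Ideal.radical_minimalPrimes, hJ, Ideal.minimalPrimes_eq_subsingleton_self]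
    rfl
  have : IsArtinian A (M ⧸ J • (⊤ : Submodule A M)) :=
    isArtinian_of_surjective_algebraMap (R := A ⧸ J) Ideal.Quotient.mk_surjective
  rw [qlen, llen_eq_length]
  exact Module.length_ne_top

theorem pw_zero (I : Ideal A) : pw A M I 0 = ⊤ := by
  rw [pw, pow_zero, Ideal.one_eq_top, top_smul]

theorem pw_succ (I : Ideal A) (n : ℕ) : pw A M I (n + 1) = I • pw A M I n := by
  rw [pw, pw, pow_succ', Submodule.mul_smul]

theorem pw_le_pw_of_smul_top_le {I J : Ideal A} (hIJ : I • (⊤ : Submodule A M) ≤ J • ⊤) (n : ℕ) :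
    pw A M I n ≤ pw A M J n := by
  induction n with
  | zero => rw [pw_zero, pw_zero]
  | succ n ih =>
    calc pw A M I (n + 1) = I ^ n • I • (⊤ : Submodule A M) := by
          rw [pw, pow_succ, Submodule.mul_smul]
      _ ≤ I ^ n • J • ⊤ := smul_mono_right _ hIJ
      _ = J • pw A M I n := by rw [pw, ← Submodule.mul_smul, ← Submodule.mul_smul, mul_comm]
      _ ≤ J • pw A M J n := smul_mono_right _ ih
      _ = pw A M J (n + 1) := (pw_succ J n).symm

theorem icolon_le_icolon_mul (K J : Ideal A) (N : Submodule A M) :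
    icolon A N J ≤ icolon A (K • N) (K * J) := by
  intro x hx a ha
  refine Submodule.mul_induction_on ha (fun r hr s hs => ?_) fun a a' ha ha' => ?_
  · rw [mul_smul]
    exact smul_mem_smul hr (hx s hs)
  · rw [add_smul]
    exact add_mem ha ha'

theorem exists_rrsat_eq_icolon [IsNoetherian A M] (I : Ideal A) (n : ℕ) :
    ∃ k, rrsat A M I n = icolon A (pw A M I (n + 1 + k)) (I ^ k) := by
  have hmono : Monotone fun k => icolon A (pw A M I (n + 1 + k)) (I ^ k) :=
    monotone_nat_of_le_succ fun k => by
      simpa only [← pw_succ, ← pow_succ', ← Nat.add_assoc] using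
        icolon_le_icolon_mul I (I ^ k) (pw A M I (n + 1 + k))
  exact ⟨_, WellFoundedGT.iSup_eq_monotonicSequenceLimit ⟨_, hmono⟩⟩

theorem pow_smul_pw_le_of_smul_top_le_icolon {I J : Ideal A} {k : ℕ}
    (h : J • (⊤ : Submodule A M) ≤ icolon A (pw A M I (1 + k)) (I ^ k)) (n : ℕ) :
    J ^ n • pw A M I k ≤ pw A M I (k + n) := by
  have hstep : ∀ j, J • pw A M I (k + j) ≤ pw A M I (k + j + 1) := fun j => by
    calc J • pw A M I (k + j) = I ^ j • I ^ k • J • (⊤ : Submodule A M) := by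
          simp only [pw, ← Submodule.mul_smul]
          ring_nf
      _ ≤ I ^ j • pw A M I (1 + k) :=
          smul_mono_right _ (smul_le.mpr fun r hr x hx => h hx r hr)
      _ = pw A M I (k + j + 1) := by
          simp only [pw, ← Submodule.mul_smul]
          ring_nf
  induction n with
  | zero => rw [pow_zero, Ideal.one_eq_top, top_smul, add_zero]
  | succ n ih =>
    calc J ^ (n + 1) • pw A M I k = J • J ^ n • pw A M I k := by
          rw [pow_succ', Submodule.mul_smul]
      _ ≤ J • pw A M I (k + n) := smul_mono_right _ ih
      _ ≤ pw A M I (k + (n + 1)) := hstep n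

end Module

theorem le_of_le_shift_of_eventually_linear {f g : ℕ → ℤ} {a c a' c' : ℤ} (s t : ℕ)
    (hf : ∀ᶠ n in atTop, f (n + 1) = a * ((n : ℤ) + 1) - c)
    (hg : ∀ᶠ n in atTop, g (n + 1) = a' * ((n : ℤ) + 1) - c')
    (hgf : ∀ n, g (n + s + 1) ≤ f (n + t + 1)) : a' ≤ a := by
  by_contra! hlt
  obtain ⟨n, ⟨hfn, hgn⟩, hn⟩ := (((tendsto_add_atTop_nat t).eventually hf).and
    ((tendsto_add_atTop_nat s).eventually hg)).and
    (eventually_gt_atTop (a * (t + 1) - c - a' * (s + 1) + c').toNat) |>.exists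
  have := hgf n
  rw [hfn, hgn] at this
  push_cast at this
  have hn' : a * (t + 1) - c - a' * (s + 1) + c' < n := (Int.self_le_toNat _).trans_lt (by omega)
  nlinarith

section LocalRing

variable {A : Type*} [CommRing A] [IsNoetherianRing A] [IsLocalRing A]
  {M : Type*} [AddCommGroup M] [Module A M] [Module.Finite A M]

theorem sup_pow_succ_smul_top_lt (W : Submodule A M) {i : ℕ}
    (h : ¬ maximalIdeal A ^ i • (⊤ : Submodule A M) ≤ W) :
    W ⊔ maximalIdeal A ^ (i + 1) • ⊤ < W ⊔ maximalIdeal A ^ i • ⊤ := by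
  refine (sup_le_sup_left (smul_mono_left (Ideal.pow_le_pow_right i.le_succ)) W).lt_of_ne
    fun heq => h (le_of_le_smul_of_le_jacobson_bot (IsNoetherian.noetherian _)
      (maximalIdeal_le_jacobson ⊥) ?_)
  rw [← Submodule.mul_smul, ← pow_succ', heq]
  exact le_sup_right

theorem hsZ_le_hsZ {I J : Ideal A} (hI : I.radical = maximalIdeal A) {m n : ℕ} (hm : m ≠ 0)
    (h : pw A M I m ≤ pw A M J n) : hsZ A M J n ≤ hsZ A M I m :=
  qlenZ_le_qlenZ h (qlen_smul_top_ne_top (by rwa [Ideal.radical_pow I hm]))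

theorem e0_eq_of_smul_top_le_rrsat {I J : Ideal A} (hI : I.radical = maximalIdeal A)
    (hJ : J.radical = maximalIdeal A) (hIJ : I • (⊤ : Submodule A M) ≤ J • ⊤)
    (hJW : J • ⊤ ≤ rrsat A M I 0) {a c a' c' : ℤ}
    (he : ∀ᶠ n in atTop, hsZ A M I (n + 1) = a * ((n : ℤ) + 1) - c)
    (he' : ∀ᶠ n in atTop, hsZ A M J (n + 1) = a' * ((n : ℤ) + 1) - c') : a = a' := by
  obtain ⟨k, hk⟩ := exists_rrsat_eq_icolon (M := M) I 0
  rw [zero_add] at hk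
  obtain ⟨q, hq⟩ : ∃ q, J ^ q ≤ I :=
    Ideal.exists_pow_le_of_le_radical_of_fg (hI ▸ hJ ▸ Ideal.le_radical) (IsNoetherian.noetherian J)
  have hJI : ∀ n, pw A M J (n + q * k) ≤ pw A M I (k + n) := fun n =>
    calc pw A M J (n + q * k) = J ^ n • (J ^ q) ^ k • (⊤ : Submodule A M) := by
          rw [pw, pow_add, pow_mul, Submodule.mul_smul]
      _ ≤ J ^ n • pw A M I k := smul_mono_right _ (smul_mono_left (Ideal.pow_right_mono hq k))
      _ ≤ pw A M I (k + n) := pow_smul_pw_le_of_smul_top_le_icolon (hk ▸ hJW) n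
  refine le_antisymm (le_of_le_shift_of_eventually_linear k (q * k) he' he fun n => ?_)
    (le_of_le_shift_of_eventually_linear 0 0 he he' fun n =>
      hsZ_le_hsZ hI n.succ_ne_zero (pw_le_pw_of_smul_top_le hIJ _))
  refine hsZ_le_hsZ hJ (by omega) ?_
  convert hJI (n + 1) using 2 <;> ring

end LocalRing

end HilbC

open HilbC

theorem stmt0_general {A : Type*} [CommRing A] [IsNoetherianRing A] [IsLocalRing A]
    {M : Type*} [AddCommGroup M] [Module A M] [Module.Finite A M]
    (I : Ideal A) (hI : HilbC.mprim A I)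
    (b : ℕ) (hb : 1 ≤ b)
    (hIb : I • (⊤ : Submodule A M) ≤ (IsLocalRing.maximalIdeal A) ^ b • ⊤)
    (e e' : ℕ → ℤ)
    (he : ∀ᶠ n in Filter.atTop,
      HilbC.hsZ A M I (n + 1) = e 0 * ((n : ℤ) + 1) - e 1)
    (he' : ∀ᶠ n in Filter.atTop,
      HilbC.hsZ A M ((IsLocalRing.maximalIdeal A) ^ b) (n + 1) = e' 0 * ((n : ℤ) + 1) - e' 1)
    (hne : e 0 ≠ e' 0) :
    ((b : ℕ∞) + 1) ≤ HilbC.sqlen A M (HilbC.pw A M I 0) (HilbC.rrsat A M I 0) := by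
  have hmb : (maximalIdeal A ^ b).radical = maximalIdeal A := by
    rw [Ideal.radical_pow _ (by omega), (maximalIdeal.isMaximal A).isPrime.radical]
  have hnot : ∀ i ≤ b, ¬ maximalIdeal A ^ i • (⊤ : Submodule A M) ≤ rrsat A M I 0 :=
    fun i hi hle => hne <| e0_eq_of_smul_top_le_rrsat hI hmb hIb
      ((smul_mono_left (Ideal.pow_le_pow_right hi)).trans hle) he he'
  rw [pw_zero, sqlen_top]
  have := le_qlen_of_decreasing_chain (n := b + 1) (W := rrsat A M I 0)
    (f := fun i => rrsat A M I 0 ⊔ maximalIdeal A ^ i • ⊤) (fun _ => le_sup_left)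
    fun i hi => sup_pow_succ_smul_top_lt (rrsat A M I 0) (hnot i (by omega))
  rwa [Nat.cast_succ] at this

/-- Lemma `I4`(ii).  Let `(A,m)` be a Noetherian local ring with infinite
residue field, `I` an `m`-primary ideal and `M` a one-dimensional finitely generated module with
`IM ⊆ m^b M` (`b ≥ 1`).  The Hilbert coefficients of `M` with respect to `I` (resp. `m^b`) are
given by the Hilbert–Samuel polynomials (degree `d = 1` case).  If `e₀(I,M) ≠ e₀(m^b,M)` then
`ℓ((G_I(M)/H⁰_{G₊}(G_I(M)))₀) ≥ b + 1`; the degree-zero piece of `G_I(M)/H⁰_{G₊}(G_I(M))` is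
`I⁰M/(I⁰M ∩ ⋃ₖ (I^{1+k}M :_M I^k))`. -/
theorem stmt0 {A : Type*} [CommRing A] [IsNoetherianRing A] [IsLocalRing A]
    [Infinite (IsLocalRing.ResidueField A)]
    {M : Type*} [AddCommGroup M] [Module A M] [Module.Finite A M]
    (I : Ideal A) (hI : HilbC.mprim A I)
    (hdim : HilbC.dimEq A M 1)
    (b : ℕ) (hb : 1 ≤ b)
    (hIb : I • (⊤ : Submodule A M) ≤ (IsLocalRing.maximalIdeal A) ^ b • ⊤)
    (e e' : ℕ → ℤ)
    (he : ∀ᶠ n in Filter.atTop,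
      HilbC.hsZ A M I (n + 1) = e 0 * ((n : ℤ) + 1) - e 1)
    (he' : ∀ᶠ n in Filter.atTop,
      HilbC.hsZ A M ((IsLocalRing.maximalIdeal A) ^ b) (n + 1) = e' 0 * ((n : ℤ) + 1) - e' 1)
    (hne : e 0 ≠ e' 0) :
    ((b : ℕ∞) + 1) ≤ HilbC.sqlen A M (HilbC.pw A M I 0) (HilbC.rrsat A M I 0) :=
  stmt0_general I hI b hb hIb e e' he he' hne
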